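/- arXiv:2507.04670 — 4 statements merged into one kernel-verified Lean document; each statement's English description precedes it below -/
import Mathlib

section
/- If a differentiable function f on a Riemannian manifold is L-smooth (i.e., f(y) ≤ f(x) + ⟨grad f(x), Exp_x^{-1}(y)⟩ + (L/2) d(x,y)^2), and given x_k, an inexact direction Δ_k with error e_k = grad f(x_k) − Δ_k, and update x_{k+1} = Exp_{x_k}(−η_k Δ_k) with step size 0 < η_k ≤ α_k/(1 + 2 α_k L) for some α_k > 0, then (η_k/2)‖grad f(x_k)‖² ≤ f(x_k) − f(x_{k+1}) + (α_k/2 + L η_k²)‖e_k‖². -/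
/-!
Write `Δ = g - e`. Polarization gives `2⟪g, Δ⟫ = ‖g‖² + ‖Δ‖² - ‖e‖²`, so the smoothness bound at the
step `-η • Δ` yields `f(x_k) - f(x_{k+1}) ≥ η/2 ‖g‖² + η/2 (1 - Lη) ‖Δ‖² - η/2 ‖e‖²`. The step-size
rule forces `Lη ≤ 1/2` and `η ≤ α`, so the `‖Δ‖²` term can be dropped and `η/2 ‖e‖² ≤ α/2 ‖e‖²`.
-/

open RealInnerProductSpace

theorem sub_ge_of_le_add_inner_add_sq {V : Type*} [NormedAddCommGroup V] [InnerProductSpace ℝ V]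
    (L η : ℝ) (g Δ : V) (f₀ f₁ : ℝ)
    (h : f₁ ≤ f₀ + ⟪g, -η • Δ⟫ + L / 2 * ‖(-η) • Δ‖ ^ 2) :
    η / 2 * ‖g‖ ^ 2 + η / 2 * (1 - L * η) * ‖Δ‖ ^ 2 - η / 2 * ‖g - Δ‖ ^ 2 ≤ f₀ - f₁ := by
  have hinner : ⟪g, -η • Δ⟫ = -η * ⟪g, Δ⟫ := real_inner_smul_right g Δ (-η)
  have hnorm : ‖(-η) • Δ‖ ^ 2 = η ^ 2 * ‖Δ‖ ^ 2 := by
    rw [norm_smul, mul_pow, Real.norm_eq_abs, sq_abs, neg_sq]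
  rw [hinner, hnorm] at h
  rw [norm_sub_sq_real g Δ]
  linear_combination h

theorem mul_le_half_and_le_of_le_div {L α η : ℝ} (hL : 0 ≤ L) (hα : 0 < α) (hη : 0 ≤ η)
    (hηle : η ≤ α / (1 + 2 * α * L)) :
    L * η ≤ 1 / 2 ∧ η ≤ α := by
  have hden : 0 < 1 + 2 * α * L := by positivity
  have hkey : η * (1 + 2 * α * L) ≤ α := (le_div_iff₀ hden).mp hηle
  constructor
  · have : α * (2 * (L * η)) ≤ α * 1 := by nlinarith
    linarith [le_of_mul_le_mul_left this hα]
  · nlinarith [mul_nonneg (mul_nonneg hα.le hL) hη]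

/-- The Riemannian data is abstracted via the tangent space `V` at `x k`: `g` is the
Riemannian gradient of `f` at `x k`, `Δ` the inexact direction, and the `L`-smoothness
inequality is instantiated at `y = x (k+1)`, using `Exp_{x_k}^{-1}(x_{k+1}) = -η • Δ`
and `d(x_k, x_{k+1}) = ‖η • Δ‖`. -/
theorem stmt_0
    {V : Type*} [NormedAddCommGroup V] [InnerProductSpace ℝ V]
    (L α η : ℝ) (hL : 0 < L) (hα : 0 < α)
    (hη : 0 < η) (hηle : η ≤ α / (1 + 2 * α * L))
    (g Δ e : V) (he : e = g - Δ)
    (fxk fxk1 : ℝ)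
    (hsmooth : fxk1 ≤ fxk + ⟪g, -η • Δ⟫ + L / 2 * ‖(-η) • Δ‖ ^ 2) :
    η / 2 * ‖g‖ ^ 2 ≤ fxk - fxk1 + (α / 2 + L * η ^ 2) * ‖e‖ ^ 2 := by
  have hdescent := sub_ge_of_le_add_inner_add_sq L η g Δ fxk fxk1 hsmooth
  rw [← he] at hdescent
  obtain ⟨hLη, hηα⟩ := mul_le_half_and_le_of_le_div hL.le hα hη.le hηle
  have hΔ : 0 ≤ η / 2 * (1 - L * η) * ‖Δ‖ ^ 2 := by
    have : 0 ≤ 1 - L * η := by linarith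
    positivity
  have he_coeff : η / 2 * ‖e‖ ^ 2 ≤ (α / 2 + L * η ^ 2) * ‖e‖ ^ 2 := by
    gcongr
    nlinarith [mul_nonneg hL.le (sq_nonneg η)]
  linarith
end

section
/- Suppose f: ℝ^n → ℝ is L-smooth, f is bounded below by f*, and iterates satisfy x_{k+1} = x_k − η Δ_k where Δ_k = ∇f(x_k) − e_k, with η = 1/(3L) and ∑_{k=0}^{K-1}‖e_k‖² ≤ C. Then min_{0≤k<K} ‖∇f(x_k)‖² ≤ (6L/K)(f(x_0) − f*) + (11/(3K)) C. -/
/-!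
Writing `Δ = ∇f(x) - e`, polarization `‖e‖² = ‖∇f(x)‖² - 2⟪∇f(x), Δ⟫ + ‖Δ‖²` turns the
smoothness bound for the step `x - ηΔ` into
`f(x - ηΔ) ≤ f(x) - η/2 ‖∇f(x)‖² + η/2 ‖e‖² - η/2 (1 - Lη) ‖Δ‖²`,
so for `Lη ≤ 1` each step loses at least `η/2 (‖∇f‖² - ‖e‖²)`. Telescoping over `K` steps
and `f ≥ f*` bound the sum of the `‖∇f(x_k)‖²`, and the smallest one is at most the average.
-/
open RealInnerProductSpace Finset

theorem descent_of_inexact_gradient_step {E : Type*} [NormedAddCommGroup E]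
    [InnerProductSpace ℝ E] [CompleteSpace E] {f : E → ℝ} {L η : ℝ}
    (hsmooth : ∀ x y : E, f y ≤ f x + ⟪gradient f x, y - x⟫ + L / 2 * ‖y - x‖ ^ 2)
    (hη : 0 ≤ η) (hLη : L * η ≤ 1) (x e : E) :
    f (x - η • (gradient f x - e))
      ≤ f x - η / 2 * ‖gradient f x‖ ^ 2 + η / 2 * ‖e‖ ^ 2 := by
  set g := gradient f x
  set Δ := g - e
  have hstep := hsmooth x (x - η • Δ)
  rw [sub_sub_cancel_left, inner_neg_right, real_inner_smul_right, norm_neg, norm_smul,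
    mul_pow, Real.norm_eq_abs, sq_abs] at hstep
  have hpolar : ‖e‖ ^ 2 = ‖g‖ ^ 2 - 2 * ⟪g, Δ⟫ + ‖Δ‖ ^ 2 := by
    rw [← norm_sub_sq_real, sub_sub_cancel]
  have hslack : 0 ≤ (1 - L * η) * η * ‖Δ‖ ^ 2 := by
    have : 0 ≤ 1 - L * η := by linarith
    positivity
  linear_combination hstep + hslack / 2 - η / 2 * hpolar

theorem sum_range_le_sub_of_le_sub {u a : ℕ → ℝ} (h : ∀ k, u (k + 1) ≤ u k - a k) (N : ℕ) :
    ∑ k ∈ range N, a k ≤ u 0 - u N := by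
  rw [← sum_range_sub']
  exact sum_le_sum fun k _ => by linarith [h k]

theorem exists_lt_le_of_sum_range_le {a : ℕ → ℝ} {K : ℕ} (hK : 0 < K) {B : ℝ}
    (h : ∑ k ∈ range K, a k ≤ K * B) : ∃ k < K, a k ≤ B := by
  have : ∑ k ∈ range K, a k ≤ ∑ _k ∈ range K, B := by simpa using h
  obtain ⟨k, hk, hle⟩ := exists_le_of_sum_le (nonempty_range_iff.mpr hK.ne') this
  exact ⟨k, mem_range.mp hk, hle⟩

theorem stmt_2
    {E : Type*} [NormedAddCommGroup E] [InnerProductSpace ℝ E] [CompleteSpace E]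
    (f : E → ℝ) (L : ℝ) (hL : 0 < L)
    (hsmooth : ∀ x y : E,
      f y ≤ f x + ⟪gradient f x, y - x⟫ + L / 2 * ‖y - x‖ ^ 2)
    (fstar : ℝ) (hbelow : ∀ x, fstar ≤ f x)
    (x : ℕ → E) (Δ e : ℕ → E) (η : ℝ) (hη : η = 1 / (3 * L))
    (hΔ : ∀ k, Δ k = gradient f (x k) - e k)
    (hupd : ∀ k, x (k + 1) = x k - η • Δ k)
    (K : ℕ) (hK : 0 < K) (C : ℝ)
    (hC : ∑ k ∈ Finset.range K, ‖e k‖ ^ 2 ≤ C) :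
    ∃ k < K, ‖gradient f (x k)‖ ^ 2
      ≤ 6 * L / K * (f (x 0) - fstar) + 11 / (3 * K) * C := by
  have hηpos : 0 < η := by rw [hη]; positivity
  have hLη : L * η = 1 / 3 := by rw [hη]; field_simp
  have hstep : ∀ k, f (x (k + 1))
      ≤ f (x k) - η / 2 * (‖gradient f (x k)‖ ^ 2 - ‖e k‖ ^ 2) := fun k => by
    rw [hupd, hΔ]
    linarith [descent_of_inexact_gradient_step hsmooth hηpos.le (by linarith) (x k) (e k)]
  have htelescope := sum_range_le_sub_of_le_sub (u := fun k => f (x k)) hstep K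
  rw [← mul_sum, sum_sub_distrib] at htelescope
  have hC_nonneg : 0 ≤ C := (sum_nonneg fun k _ => by positivity).trans hC
  have hKpos : (0 : ℝ) < K := Nat.cast_pos.mpr hK
  apply exists_lt_le_of_sum_range_le hK
  have hbound : (K : ℝ) * (6 * L / K * (f (x 0) - fstar) + 11 / (3 * K) * C)
      = 6 * L * (f (x 0) - fstar) + 11 / 3 * C := by
    field_simp
  rw [hbound]
  set S := ∑ k ∈ range K, ‖gradient f (x k)‖ ^ 2 - ∑ k ∈ range K, ‖e k‖ ^ 2
  have hS_le : S ≤ 6 * L * (f (x 0) - fstar) :=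
    calc S = 6 * L * (η / 2 * S) := by linear_combination (-3 * S) * hLη
      _ ≤ 6 * L * (f (x 0) - fstar) := by gcongr; linarith [hbelow (x K)]
  linarith
end

section
/- Let Δ = g − e be vectors in an inner product space with ‖e‖ ≤ δ‖g‖ and δ ∈ [0,1). Then for any ᾱ ∈ (1, 1/δ²), ‖Δ‖² ≥ (1 − 1/ᾱ + (1−ᾱ)δ²)‖g‖², and the coefficient 1 − 1/ᾱ + (1−ᾱ)δ² is positive. -/
open RealInnerProductSpace

/- Young's inequality `2⟪g, e⟫ ≤ α⁻¹‖g‖² + α‖e‖²` turns `‖g - e‖² = ‖g‖² - 2⟪g, e⟫ + ‖e‖²` into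
`‖g - e‖² ≥ (1 - α⁻¹)‖g‖² + (1 - α)‖e‖²`; for `α ≥ 1` the second coefficient is nonpositive, so
`‖e‖ ≤ δ‖g‖` may be substituted. The coefficient factors as `(α - 1)(1 - αδ²)/α`, positive for
`1 < α < δ⁻²`. -/

section

variable {E : Type*} [NormedAddCommGroup E] [InnerProductSpace ℝ E]

theorem two_mul_real_inner_le_inv_mul_norm_sq_add_mul_norm_sq (g e : E) {α : ℝ} (hα : 0 < α) :
    2 * ⟪g, e⟫ ≤ α⁻¹ * ‖g‖ ^ 2 + α * ‖e‖ ^ 2 := by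
  have h : 0 ≤ ‖g - α • e‖ ^ 2 := sq_nonneg _
  rw [norm_sub_sq_real, real_inner_smul_right, norm_smul, Real.norm_of_nonneg hα.le] at h
  rw [← mul_le_mul_iff_right₀ hα]
  field_simp
  nlinarith

theorem inv_mul_add_norm_sq_le_norm_sub_sq (g e : E) {α : ℝ} (hα : 0 < α) :
    (1 - α⁻¹) * ‖g‖ ^ 2 + (1 - α) * ‖e‖ ^ 2 ≤ ‖g - e‖ ^ 2 := by
  have hyoung := two_mul_real_inner_le_inv_mul_norm_sq_add_mul_norm_sq g e hα
  rw [norm_sub_sq_real]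
  linarith

end

theorem one_sub_inv_add_one_sub_mul_sq_pos {α δ : ℝ} (hα1 : 1 < α) (hαδ : α * δ ^ 2 < 1) :
    0 < 1 - α⁻¹ + (1 - α) * δ ^ 2 := by
  have hα0 : 0 < α := by linarith
  have hfactor : 1 - α⁻¹ + (1 - α) * δ ^ 2 = (α - 1) * (1 - α * δ ^ 2) / α := by
    field_simp
    ring
  rw [hfactor]
  exact div_pos (mul_pos (by linarith) (by linarith)) hα0

theorem stmt_7_general
    {E : Type*} [NormedAddCommGroup E] [InnerProductSpace ℝ E]
    (g e : E) (δ : ℝ)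
    (he : ‖e‖ ≤ δ * ‖g‖)
    (α : ℝ) (hα1 : 1 < α) (hαδ : α * δ ^ 2 < 1) :
    ‖g - e‖ ^ 2 ≥ (1 - 1 / α + (1 - α) * δ ^ 2) * ‖g‖ ^ 2
    ∧ 0 < 1 - 1 / α + (1 - α) * δ ^ 2 := by
  rw [one_div]
  have he2 : ‖e‖ ^ 2 ≤ δ ^ 2 * ‖g‖ ^ 2 := by
    rw [← mul_pow]
    exact pow_le_pow_left₀ (norm_nonneg e) he 2
  refine ⟨?_, one_sub_inv_add_one_sub_mul_sq_pos hα1 hαδ⟩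
  calc (1 - α⁻¹ + (1 - α) * δ ^ 2) * ‖g‖ ^ 2
      = (1 - α⁻¹) * ‖g‖ ^ 2 + (1 - α) * (δ ^ 2 * ‖g‖ ^ 2) := by ring
    _ ≤ (1 - α⁻¹) * ‖g‖ ^ 2 + (1 - α) * ‖e‖ ^ 2 := by
        gcongr _ + ?_
        exact mul_le_mul_of_nonpos_left he2 (by linarith)
    _ ≤ ‖g - e‖ ^ 2 := inv_mul_add_norm_sq_le_norm_sub_sq g e (by linarith)

theorem stmt_7
    {E : Type*} [NormedAddCommGroup E] [InnerProductSpace ℝ E]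
    (g e : E) (δ : ℝ) (hδ0 : 0 ≤ δ) (hδ1 : δ < 1)
    (he : ‖e‖ ≤ δ * ‖g‖)
    (α : ℝ) (hα1 : 1 < α) (hαδ : α * δ ^ 2 < 1) :
    ‖g - e‖ ^ 2 ≥ (1 - 1 / α + (1 - α) * δ ^ 2) * ‖g‖ ^ 2
    ∧ 0 < 1 - 1 / α + (1 - α) * δ ^ 2 :=
  stmt_7_general g e δ he α hα1 hαδ
end

section
/- Let f: ℝ^n → ℝ be L-smooth with minimizer value f(x*) and consider inexact gradient descent x_{k+1} = x_k − η_k Δ_k, Δ_k = ∇f(x_k) − e_k with ‖e_k‖² ≤ 1/(k+1), α_k = 1/(2L log²(k+2)) and η_k = α_k/2. Then min_{0≤k<K}‖∇f(x_k)‖² ≤ (8L log²(K+2)/K)(f(x_0) − f(x*)) + (21/(2K)) log²(K+2). -/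
/-!
Summing the per-step inequality telescopes `f`. Since `η_k / 2 = 1 / (8 L ℓ_k²)` with
`ℓ_k = log (k + 2)` is at least `1 / (8 L ℓ_K²)` for `k < K`, the smallest `‖∇f(x_k)‖²` is at
most `8 L ℓ_K² / K` times `f(x_0) - f(x*)` plus the accumulated error. The error terms are at most
`errorWeight k / (16 L)`, and `∑ errorWeight k ≤ 21`: the terms `k = 0, 1` are estimated
numerically, and from `k = 2` on they telescope against `1 / log (k + 1) - 1 / log (k + 2)`,
because `log (k + 2) - log (k + 1) ≥ 1 / (k + 2)`.
-/

open Finset Real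

lemma inv_succ_le_log_succ_sub_log {x : ℝ} (hx : 0 < x) :
    1 / (x + 1) ≤ log (x + 1) - log x := by
  have h := one_sub_inv_le_log_of_pos (show 0 < (x + 1) / x by positivity)
  rw [log_div (by positivity) hx.ne', inv_div] at h
  calc 1 / (x + 1) = 1 - x / (x + 1) := by field_simp; ring
    _ ≤ _ := h

lemma inv_mul_log_mul_log_le_inv_log_sub {x : ℝ} (hx : 1 < x) :
    1 / ((x + 1) * (log x * log (x + 1))) ≤ 1 / log x - 1 / log (x + 1) := by
  have hlog : 0 < log x := log_pos hx
  have hlog' : 0 < log (x + 1) := log_pos (by linarith)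
  rw [div_sub_div _ _ hlog.ne' hlog'.ne', one_mul, mul_one, ← div_div]
  gcongr
  exact inv_succ_le_log_succ_sub_log (by linarith)

lemma inv_mul_log_sq_le_of_three_le {x : ℝ} (hx : 3 ≤ x) :
    1 / (x * log (x + 1) ^ 2) ≤ 4 / 3 * (1 / log x - 1 / log (x + 1)) := by
  have hlog : 0 < log x := log_pos (by linarith)
  refine le_trans ?_ (mul_le_mul_of_nonneg_left (inv_mul_log_mul_log_le_inv_log_sub
    (by linarith)) (by norm_num))
  have hlog1 : 0 < log (x + 1) := log_pos (by linarith)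
  rw [mul_one_div, div_le_div_iff₀ (by positivity) (by positivity)]
  have : (x + 1) * log x ≤ 4 / 3 * x * log (x + 1) := by
    gcongr
    · linarith
    · linarith
  nlinarith

lemma sum_range_le_of_le_sub_succ {f g : ℕ → ℝ} (hg : ∀ n, 0 ≤ g n)
    (hfg : ∀ k, f k ≤ g k - g (k + 1)) (n : ℕ) : ∑ k ∈ range n, f k ≤ g 0 := by
  calc ∑ k ∈ range n, f k ≤ ∑ k ∈ range n, (g k - g (k + 1)) :=
        sum_le_sum fun k _ => hfg k
    _ = g 0 - g n := sum_range_sub' g n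
    _ ≤ g 0 := sub_le_self _ (hg n)

noncomputable def errorWeight (k : ℕ) : ℝ :=
  (4 + 1 / log (k + 2) ^ 2) / ((k + 1) * log (k + 2) ^ 2)

lemma errorWeight_nonneg (k : ℕ) : 0 ≤ errorWeight k := by
  unfold errorWeight; positivity

lemma errorWeight_add_two_le (j : ℕ) :
    errorWeight (j + 2) ≤
      (4 + 1 / log 4 ^ 2) * (4 / 3 * (1 / log (j + 3) - 1 / log (j + 4))) := by
  have hj : (0 : ℝ) ≤ j := j.cast_nonneg
  have htel := inv_mul_log_sq_le_of_three_le (x := (j : ℝ) + 3) (by linarith)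
  rw [show (j : ℝ) + 3 + 1 = j + 4 by ring] at htel
  unfold errorWeight
  push_cast
  rw [show (j : ℝ) + 2 + 2 = j + 4 by ring, show (j : ℝ) + 2 + 1 = j + 3 by ring,
    div_eq_mul_one_div]
  have hlog4 : 0 < log 4 := log_pos (by norm_num)
  calc (4 + 1 / log (j + 4) ^ 2) * (1 / ((j + 3) * log (j + 4) ^ 2))
      ≤ (4 + 1 / log 4 ^ 2) * (1 / ((j + 3) * log (j + 4) ^ 2)) := by
        gcongr (4 + ?_) * _
        exact one_div_le_one_div_of_le (by positivity)
          (pow_le_pow_left₀ hlog4.le (log_le_log (by norm_num) (by linarith)) 2)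
    _ ≤ _ := mul_le_mul_of_nonneg_left htel (by positivity)

lemma log_two_add_third_le_log_three : log 2 + 1 / 3 ≤ log 3 := by
  have h := one_sub_inv_le_log_of_pos (show (0 : ℝ) < 3 / 2 by norm_num)
  rw [log_div (by norm_num) (by norm_num)] at h
  norm_num at h
  linarith

lemma sum_range_errorWeight_le (K : ℕ) : ∑ k ∈ range K, errorWeight k ≤ 21 := by
  set C : ℝ := 4 + 1 / log 4 ^ 2
  have htail (n : ℕ) : ∑ j ∈ range n, errorWeight (j + 2) ≤ C * (4 / 3 * (1 / log 3)) := by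
    have := sum_range_le_of_le_sub_succ (f := fun j => errorWeight (j + 2))
      (g := fun j : ℕ => C * (4 / 3 * (1 / log ((j : ℝ) + 3))))
      (fun n => by
        have : 0 < log ((n : ℝ) + 3) := log_pos (by linarith [n.cast_nonneg (α := ℝ)])
        positivity)
      (fun j => (errorWeight_add_two_le j).trans_eq
        (by push_cast; rw [show (j : ℝ) + 1 + 3 = j + 4 by ring]; ring)) n
    simpa using this
  have hhead : errorWeight 0 + errorWeight 1 + C * (4 / 3 * (1 / log 3)) ≤ 21 := by
    have hlog2 := log_two_gt_d9
    have hlog3 := log_two_add_third_le_log_three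
    have hp : (log 2)⁻¹ ≤ 1.4431 := by
      rw [inv_le_comm₀ (by linarith) (by norm_num)]; linarith
    have hq : (log 3)⁻¹ ≤ 0.9747 := by
      rw [inv_le_comm₀ (by linarith) (by norm_num)]; linarith
    have hlog4 : log 4 = 2 * log 2 := by
      rw [show (4 : ℝ) = 2 ^ 2 by norm_num, log_pow, Nat.cast_ofNat]
    norm_num [errorWeight, C, hlog4]
    calc _ = (4 + (log 2)⁻¹ ^ 2) * (log 2)⁻¹ ^ 2
          + (4 + (log 3)⁻¹ ^ 2) * (log 3)⁻¹ ^ 2 / 2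
          + (4 + (log 2)⁻¹ ^ 2 / 4) * (4 / 3 * (log 3)⁻¹) := by ring
      _ ≤ (4 + 1.4431 ^ 2) * 1.4431 ^ 2 + (4 + 0.9747 ^ 2) * 0.9747 ^ 2 / 2
          + (4 + 1.4431 ^ 2 / 4) * (4 / 3 * 0.9747) := by gcongr
      _ ≤ 21 := by norm_num
  calc ∑ k ∈ range K, errorWeight k ≤ ∑ k ∈ range (K + 2), errorWeight k :=
        sum_le_sum_of_subset_of_nonneg (range_subset_range.2 (by omega))
          fun k _ _ => errorWeight_nonneg k
    _ = ∑ j ∈ range K, errorWeight (j + 2) + errorWeight 1 + errorWeight 0 := by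
        rw [sum_range_succ', sum_range_succ']
    _ ≤ 21 := by linarith [htail K]

lemma exists_lt_le_div_of_sum_mul_le {w g : ℕ → ℝ} {c B : ℝ} {K : ℕ} (hK : 0 < K)
    (hc : 0 < c) (hw : ∀ k < K, c ≤ w k) (hg : ∀ k, 0 ≤ g k)
    (hsum : ∑ k ∈ range K, w k * g k ≤ B) :
    ∃ k < K, g k ≤ B / (c * K) := by
  have hK' : (0 : ℝ) < K := Nat.cast_pos.2 hK
  have hle : ∑ k ∈ range K, c * g k ≤ ∑ _k ∈ range K, B / K := by
    rw [sum_const, card_range, nsmul_eq_mul, mul_div_cancel₀ _ hK'.ne']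
    exact (sum_le_sum fun k hk => mul_le_mul_of_nonneg_right (hw k (mem_range.1 hk)) (hg k)).trans
      hsum
  obtain ⟨k, hk, hck⟩ := exists_le_of_sum_le (nonempty_range_iff.2 hK.ne') hle
  refine ⟨k, mem_range.1 hk, ?_⟩
  rwa [mul_comm, ← div_div, le_div_iff₀ hc, mul_comm]

theorem stmt_12_general
    {E : Type*} [NormedAddCommGroup E] [InnerProductSpace ℝ E] [CompleteSpace E]
    (f : E → ℝ) (L : ℝ) (hL : 0 < L)
    (xstar : E) (hbelow : ∀ x, f xstar ≤ f x)
    (x : ℕ → E) (e : ℕ → E) (α η : ℕ → ℝ)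
    (hα : ∀ k, α k = 1 / (2 * L * Real.log ((k : ℝ) + 2) ^ 2))
    (hη : ∀ k, η k = α k / 2)
    (he : ∀ k, ‖e k‖ ^ 2 ≤ 1 / ((k : ℝ) + 1))
    (hstep : ∀ k, η k / 2 * ‖gradient f (x k)‖ ^ 2
      ≤ f (x k) - f (x (k + 1)) + (α k / 2 + L * η k ^ 2) * ‖e k‖ ^ 2)
    (K : ℕ) (hK : 0 < K) :
    ∃ k < K, ‖gradient f (x k)‖ ^ 2
      ≤ 8 * L * Real.log ((K : ℝ) + 2) ^ 2 / K * (f (x 0) - f xstar)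
        + 21 / (2 * K) * Real.log ((K : ℝ) + 2) ^ 2 := by
  have hlog (k : ℕ) : 0 < log ((k : ℝ) + 2) := log_pos (by linarith [k.cast_nonneg (α := ℝ)])
  have hdescent (k : ℕ) : η k / 2 = 1 / (8 * L * log ((k : ℝ) + 2) ^ 2) := by
    have := hlog k
    rw [hη, hα]; field_simp; ring
  have herror (k : ℕ) :
      (α k / 2 + L * η k ^ 2) * ‖e k‖ ^ 2 ≤ errorWeight k / (16 * L) := by
    have := hlog k
    calc (α k / 2 + L * η k ^ 2) * ‖e k‖ ^ 2
        ≤ (α k / 2 + L * η k ^ 2) * (1 / ((k : ℝ) + 1)) := by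
          gcongr
          · rw [hη, hα]; positivity
          · exact he k
      _ = errorWeight k / (16 * L) := by
          rw [hη, hα, errorWeight]; field_simp; ring
  have hsum : ∑ k ∈ range K, η k / 2 * ‖gradient f (x k)‖ ^ 2
      ≤ f (x 0) - f xstar + 21 / (16 * L) :=
    calc _ ≤ ∑ k ∈ range K, (f (x k) - f (x (k + 1)) + errorWeight k / (16 * L)) :=
          sum_le_sum fun k _ => (hstep k).trans (add_le_add_right (herror k) _)
      _ = f (x 0) - f (x K) + (∑ k ∈ range K, errorWeight k) / (16 * L) := by
          rw [sum_add_distrib, sum_range_sub', sum_div]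
      _ ≤ f (x 0) - f xstar + 21 / (16 * L) := by
          gcongr
          · exact hbelow _
          · exact sum_range_errorWeight_le K
  obtain ⟨k, hk, hbound⟩ := exists_lt_le_div_of_sum_mul_le hK
    (c := 1 / (8 * L * log ((K : ℝ) + 2) ^ 2)) (by have := hlog K; positivity)
    (fun k hk => by have := hlog k; rw [hdescent]; gcongr) (fun k => by positivity) hsum
  refine ⟨k, hk, hbound.trans_eq ?_⟩
  have := hlog K
  field_simp
  ring

theorem stmt_12
    {E : Type*} [NormedAddCommGroup E] [InnerProductSpace ℝ E] [CompleteSpace E]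
    (f : E → ℝ) (L : ℝ) (hL : 0 < L)
    (xstar : E) (hbelow : ∀ x, f xstar ≤ f x)
    (x : ℕ → E) (Δ e : ℕ → E) (α η : ℕ → ℝ)
    (hα : ∀ k, α k = 1 / (2 * L * Real.log ((k : ℝ) + 2) ^ 2))
    (hη : ∀ k, η k = α k / 2)
    (hΔ : ∀ k, Δ k = gradient f (x k) - e k)
    (hupd : ∀ k, x (k + 1) = x k - η k • Δ k)
    (he : ∀ k, ‖e k‖ ^ 2 ≤ 1 / ((k : ℝ) + 1))
    (hstep : ∀ k, η k / 2 * ‖gradient f (x k)‖ ^ 2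
      ≤ f (x k) - f (x (k + 1)) + (α k / 2 + L * η k ^ 2) * ‖e k‖ ^ 2)
    (K : ℕ) (hK : 0 < K) :
    ∃ k < K, ‖gradient f (x k)‖ ^ 2
      ≤ 8 * L * Real.log ((K : ℝ) + 2) ^ 2 / K * (f (x 0) - f xstar)
        + 21 / (2 * K) * Real.log ((K : ℝ) + 2) ^ 2 :=
  stmt_12_general f L hL xstar hbelow x e α η hα hη he hstep K hK
end
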